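/- For α > 0 and any real λ, the derivative of x ↦ E_{α,1}(λ x^α) on (0,∞) equals λ x^{α−1} E_{α,α}(λ x^α). -/

import Mathlib

/-- Two-parameter Mittag-Leffler function (with the `1/Γ = 0` convention at poles,
automatic since `Real.Gamma` vanishes at nonpositive integers). -/
noncomputable def mittagLeffler (α β z : ℝ) : ℝ :=
  ∑' k : ℕ, z ^ k / Real.Gamma (α * k + β)

/-! The derivative in `z` of `E_{α,1}(z) = ∑ z^k / Γ(αk+1)` is `E_{α,α}(z) / α`, termwise, since
`(k+1) / Γ(α(k+1)+1) = 1 / (α Γ(αk+α))`; the chain rule through `z = λ x^α` then contributes the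
factor `α λ x^(α-1)`. Termwise differentiation is justified on every ball, where the derivative
series is dominated by a Mittag-Leffler series. These converge by the ratio test, because
`Γ(a) / Γ(a+α) ≤ (a-1)^(-α) → 0` by log-convexity of `Γ`. -/

open Filter Topology Real

/-- Log-convexity of `Γ`: the slope of `log Γ` on `[a - 1, a]` is `log (a - 1)`, and slopes
increase to the right. -/
theorem Real.Gamma_mul_rpow_le_Gamma_add {a α : ℝ} (ha : 1 < a) (hα : 0 < α) :
    Gamma a * (a - 1) ^ α ≤ Gamma (a + α) := by
  have ha₁ : 0 < a - 1 := by linarith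
  have hslope := convexOn_log_Gamma.slope_mono_adjacent (x := a - 1) (y := a) (z := a + α)
    ha₁ (by simp; linarith) (by linarith) (by linarith)
  have hlog : log (Gamma a) - log (Gamma (a - 1)) = log (a - 1) := by
    have hrec : Gamma a = (a - 1) * Gamma (a - 1) := by
      simpa using Gamma_add_one ha₁.ne'
    rw [hrec, log_mul ha₁.ne' (Gamma_pos_of_pos ha₁).ne', add_sub_cancel_right]
  simp only [Function.comp_apply, sub_sub_cancel, add_sub_cancel_left, div_one, hlog] at hslope
  have key : log (Gamma a) + α * log (a - 1) ≤ log (Gamma (a + α)) := by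
    linarith [(le_div_iff₀ hα).mp hslope]
  calc Gamma a * (a - 1) ^ α = exp (log (Gamma a) + α * log (a - 1)) := by
        rw [exp_add, exp_log (Gamma_pos_of_pos (by linarith)), rpow_def_of_pos ha₁, mul_comm α]
    _ ≤ exp (log (Gamma (a + α))) := exp_le_exp.2 key
    _ = Gamma (a + α) := exp_log (Gamma_pos_of_pos (by linarith))

theorem Real.tendsto_Gamma_div_Gamma_add_atTop {α : ℝ} (hα : 0 < α) :
    Tendsto (fun a => Gamma a / Gamma (a + α)) atTop (𝓝 0) := by
  have hbound : Tendsto (fun a : ℝ => ((a - 1) ^ α)⁻¹) atTop (𝓝 0) :=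
    ((tendsto_rpow_atTop hα).comp
      (tendsto_atTop_add_const_right _ (-1) tendsto_id)).inv_tendsto_atTop
  refine tendsto_of_tendsto_of_tendsto_of_le_of_le' tendsto_const_nhds hbound ?_ ?_
  · filter_upwards [eventually_gt_atTop 0] with a ha
    exact div_nonneg (Gamma_pos_of_pos ha).le (Gamma_pos_of_pos (by linarith)).le
  · filter_upwards [eventually_gt_atTop 1] with a ha
    have ha₁ : 0 < (a - 1) ^ α := rpow_pos_of_pos (by linarith) α
    rw [div_le_iff₀ (Gamma_pos_of_pos (by linarith)), ← div_eq_inv_mul, le_div_iff₀ ha₁]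
    exact Gamma_mul_rpow_le_Gamma_add ha hα

theorem summable_mittagLeffler {α : ℝ} (hα : 0 < α) (β z : ℝ) :
    Summable fun k : ℕ => z ^ k / Gamma (α * k + β) := by
  have harg : Tendsto (fun k : ℕ => α * k + β) atTop atTop :=
    tendsto_atTop_add_const_right _ β (tendsto_natCast_atTop_atTop.const_mul_atTop hα)
  have hratio : Tendsto (fun k : ℕ => |z| * (Gamma (α * k + β) / Gamma (α * k + β + α)))
      atTop (𝓝 0) := by
    simpa using ((tendsto_Gamma_div_Gamma_add_atTop hα).comp harg).const_mul |z|
  refine summable_of_ratio_norm_eventually_le (r := 1 / 2) (by norm_num) ?_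
  filter_upwards [hratio.eventually (ge_mem_nhds one_half_pos), harg.eventually_gt_atTop 0]
    with k hk hpos
  have hΓ := Gamma_pos_of_pos hpos
  have hΓα := Gamma_pos_of_pos (add_pos hpos hα)
  have hnext : ‖z ^ (k + 1) / Gamma (α * (k + 1 : ℕ) + β)‖
      = ‖z ^ k / Gamma (α * k + β)‖ * (|z| * (Gamma (α * k + β) / Gamma (α * k + β + α))) := by
    rw [show α * ((k + 1 : ℕ) : ℝ) + β = α * k + β + α by push_cast; ring]
    simp only [norm_div, norm_pow, norm_eq_abs, abs_of_pos hΓ, abs_of_pos hΓα]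
    field_simp
    ring
  rw [hnext, mul_comm (1 / 2)]
  exact mul_le_mul_of_nonneg_left hk (norm_nonneg _)

theorem succ_mul_pow_div_Gamma_mul_succ_add_one {α : ℝ} (hα : 0 < α) (k : ℕ) (w : ℝ) :
    ((k + 1 : ℕ) : ℝ) * w ^ k / Gamma (α * (k + 1 : ℕ) + 1) = w ^ k / Gamma (α * k + α) / α := by
  have hpos : 0 < α * k + α := by positivity
  rw [show α * ((k + 1 : ℕ) : ℝ) + 1 = α * k + α + 1 by push_cast; ring,
    Gamma_add_one hpos.ne', show α * k + α = α * (k + 1) by ring]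
  have hΓ := (Gamma_pos_of_pos (by positivity : 0 < α * ((k : ℝ) + 1))).ne'
  push_cast
  field_simp

theorem hasDerivAt_mittagLeffler_one {α : ℝ} (hα : 0 < α) (z : ℝ) :
    HasDerivAt (mittagLeffler α 1) (mittagLeffler α α z / α) z := by
  set g' : ℕ → ℝ → ℝ := fun k w => k * w ^ (k - 1) / Gamma (α * k + 1)
  have hΓ (k : ℕ) : 0 < Gamma (α * k + 1) := Gamma_pos_of_pos (by positivity)
  have hg' (w : ℝ) : g' 0 w = 0 ∧ ∀ k, g' (k + 1) w = w ^ k / Gamma (α * k + α) / α :=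
    ⟨by simp [g'], fun k => by simpa [g'] using succ_mul_pow_div_Gamma_mul_succ_add_one hα k w⟩
  set R := |z| + 1
  have hbound : ∀ k, ∀ w ∈ Metric.ball (0 : ℝ) R, ‖g' k w‖ ≤ g' k R := by
    intro k w hw
    rw [mem_ball_zero_iff, norm_eq_abs] at hw
    simp only [g', norm_div, norm_mul, norm_pow, norm_eq_abs, Nat.abs_cast, abs_of_pos (hΓ k)]
    gcongr
  have hsum_bound : Summable fun k => g' k R := by
    rw [← summable_nat_add_iff 1]
    simpa only [(hg' R).2] using (summable_mittagLeffler hα α R).div_const α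
  have hz : z ∈ Metric.ball (0 : ℝ) R := by simp [R]
  have htsum : ∑' k, g' k z = mittagLeffler α α z / α := by
    rw [(Summable.of_norm_bounded hsum_bound fun k => hbound k z hz).tsum_eq_zero_add,
      (hg' z).1, zero_add, tsum_congr (hg' z).2, tsum_div_const, mittagLeffler]
  rw [← htsum]
  exact hasDerivAt_tsum_of_isPreconnected hsum_bound Metric.isOpen_ball
    (convex_ball 0 R).isPreconnected (fun k w _ => (hasDerivAt_pow k w).div_const _) hbound
    (Metric.mem_ball_self (by positivity)) (summable_mittagLeffler hα 1 0) hz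

theorem deriv_mittagLeffler_one (α lam : ℝ) (hα : 0 < α) (x : ℝ) (hx : 0 < x) :
    HasDerivAt (fun x : ℝ => mittagLeffler α 1 (lam * x ^ α))
      (lam * x ^ (α - 1) * mittagLeffler α α (lam * x ^ α)) x := by
  have hinner : HasDerivAt (fun x : ℝ => lam * x ^ α) (lam * (α * x ^ (α - 1))) x :=
    (hasDerivAt_rpow_const (Or.inl hx.ne')).const_mul lam
  refine ((hasDerivAt_mittagLeffler_one hα (lam * x ^ α)).comp x hinner).congr_deriv ?_
  field_simp
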